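/- arXiv:1208.2726 — 2 statements merged into one kernel-verified Lean document; each statement's English description precedes it below -/
import Mathlib

section
/- Let E be a real Banach space, let κ > 0, T ≥ 0, and B ≥ 0. Suppose f : ℝ → E is differentiable at every point of [0, T] with derivative f'(t), that g : ℝ → E is continuous on [0, T], that f(t) + κ f'(t) = g(t) for every t ∈ [0, T], and that ‖g(t)‖ ≤ B for every t ∈ [0, T]. Then ‖f(t)‖ ≤ max(‖f(0)‖, B) for every t ∈ [0, T]. -/
/-!
Multiplying by the integrating factor `exp (t / κ)` turns `f + κ • f' = g` into
`(exp (t / κ) • f)' = (exp (t / κ) / κ) • g`. If `‖f a‖ ≤ M` and `‖g‖ ≤ M`, the norm of this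
derivative is at most the derivative of `M * exp (t / κ)`, so the fencing form of the mean value
inequality gives `exp (t / κ) * ‖f t‖ ≤ M * exp (t / κ)`.
-/

open Set Real

section IntegratingFactor

variable {E : Type*} [NormedAddCommGroup E] [NormedSpace ℝ E]

theorem hasDerivWithinAt_exp_div_smul_of_add_smul_eq {f : ℝ → E} {f' g : E} {κ t : ℝ}
    {s : Set ℝ} (hκ : κ ≠ 0) (hf : HasDerivWithinAt f f' s t) (heq : f t + κ • f' = g) :
    HasDerivWithinAt (fun u => exp (u / κ) • f u) ((exp (t / κ) / κ) • g) s t := by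
  have hexp : HasDerivWithinAt (fun u => exp (u / κ)) (exp (t / κ) / κ) s t := by
    simpa [div_eq_mul_inv, mul_comm] using
      ((hasDerivAt_id t).div_const κ).exp.hasDerivWithinAt (s := s)
  rw [← heq, smul_add, smul_smul, div_mul_cancel₀ _ hκ, add_comm]
  exact hexp.smul hf

theorem norm_le_of_add_smul_deriv_eq {f f' g : ℝ → E} {κ a b M : ℝ} (hκ : 0 < κ)
    (hf : ContinuousOn f (Icc a b)) (hf' : ∀ t ∈ Ico a b, HasDerivWithinAt f (f' t) (Ici t) t)
    (heq : ∀ t ∈ Ico a b, f t + κ • f' t = g t) (ha : ‖f a‖ ≤ M)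
    (hg : ∀ t ∈ Ico a b, ‖g t‖ ≤ M) :
    ∀ t ∈ Icc a b, ‖f t‖ ≤ M := by
  have hfactor : ContinuousOn (fun u => exp (u / κ)) (Icc a b) := by fun_prop
  have hbarrier (t : ℝ) : HasDerivAt (fun u => M * exp (u / κ)) (M * (exp (t / κ) / κ)) t := by
    simpa [div_eq_mul_inv, mul_comm] using (((hasDerivAt_id t).div_const κ).exp.const_mul M)
  have hbound : ∀ t ∈ Ico a b, ‖(exp (t / κ) / κ) • g t‖ ≤ M * (exp (t / κ) / κ) := by
    intro t ht
    rw [norm_smul, Real.norm_of_nonneg (by positivity), mul_comm]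
    gcongr
    exact hg t ht
  have hweighted := image_norm_le_of_norm_deriv_right_le_deriv_boundary
    (f := fun u => exp (u / κ) • f u) (hfactor.smul hf)
    (fun t ht => hasDerivWithinAt_exp_div_smul_of_add_smul_eq hκ.ne' (hf' t ht) (heq t ht))
    (by rw [norm_smul, Real.norm_of_nonneg (exp_pos _).le, mul_comm]; gcongr) hbarrier hbound
  intro t ht
  have hscaled := hweighted ht
  rw [norm_smul, Real.norm_of_nonneg (exp_pos _).le, mul_comm] at hscaled
  exact le_of_mul_le_mul_right hscaled (exp_pos _)

end IntegratingFactor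

theorem f_plus_kappa_ft_estimate_general
    {E : Type*} [NormedAddCommGroup E] [NormedSpace ℝ E]
    (κ T B : ℝ) (hκ : 0 < κ)
    (f f' g : ℝ → E)
    (hf : ∀ t ∈ Set.Icc (0 : ℝ) T, HasDerivAt f (f' t) t)
    (heq : ∀ t ∈ Set.Icc (0 : ℝ) T, f t + κ • f' t = g t)
    (hgB : ∀ t ∈ Set.Icc (0 : ℝ) T, ‖g t‖ ≤ B) :
    ∀ t ∈ Set.Icc (0 : ℝ) T, ‖f t‖ ≤ max ‖f 0‖ B :=
  norm_le_of_add_smul_deriv_eq hκ (fun t ht => (hf t ht).continuousAt.continuousWithinAt)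
    (fun t ht => (hf t (Ico_subset_Icc_self ht)).hasDerivWithinAt)
    (fun t ht => heq t (Ico_subset_Icc_self ht)) (le_max_left _ _)
    (fun t ht => (hgB t (Ico_subset_Icc_self ht)).trans (le_max_right _ _))

/-- **Lemma 2.5** (Section 2.5.3), with sharp constant `C = 1`: if
`f + κ • f' = g` on `[0, T]` with `κ > 0` and `‖g‖ ≤ B` on `[0, T]`, then
`‖f t‖ ≤ max ‖f 0‖ B` on `[0, T]`. -/
theorem f_plus_kappa_ft_estimate
    {E : Type*} [NormedAddCommGroup E] [NormedSpace ℝ E] [CompleteSpace E]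
    (κ T B : ℝ) (hκ : 0 < κ) (hT : 0 ≤ T) (hB : 0 ≤ B)
    (f f' g : ℝ → E)
    (hf : ∀ t ∈ Set.Icc (0 : ℝ) T, HasDerivAt f (f' t) t)
    (hg : ContinuousOn g (Set.Icc (0 : ℝ) T))
    (heq : ∀ t ∈ Set.Icc (0 : ℝ) T, f t + κ • f' t = g t)
    (hgB : ∀ t ∈ Set.Icc (0 : ℝ) T, ‖g t‖ ≤ B) :
    ∀ t ∈ Set.Icc (0 : ℝ) T, ‖f t‖ ≤ max ‖f 0‖ B :=
  f_plus_kappa_ft_estimate_general κ T B hκ f f' g hf heq hgB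
end

section
/- Let n be a natural number, let M : ℝ → Matrix (Fin n) (Fin n) ℝ have derivative M' at t₀ (entrywise), and suppose det(M(t₀)) ≠ 0. Then the map t ↦ adjugate(M(t)) has derivative at t₀ equal to (det M(t₀))⁻¹ • ( trace(adjugate(M(t₀)) * M') • adjugate(M(t₀)) − adjugate(M(t₀)) * M' * adjugate(M(t₀)) ). -/
/-!
Each entry of `adjugate (M t)` is the determinant of a matrix whose entries are differentiable, so
by Jacobi's formula `(det M)' = trace (adjugate M * M')` the adjugate has some derivative `A'`.
Differentiating `adjugate (M t) * M t = det (M t) • 1` gives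
`A' * M + adjugate M * M' = trace (adjugate M * M') • 1`, and since `M t₀` is invertible this
determines `A'`.
-/

open Finset

namespace Matrix

variable {ι : Type*} [Fintype ι] [DecidableEq ι]

theorem trace_adjugate_mul_eq_sum_det_updateCol {R : Type*} [CommRing R] (A B : Matrix ι ι R) :
    trace (A.adjugate * B) = ∑ j, (A.updateCol j fun i => B i j).det := by
  simp only [← cramer_apply, cramer_eq_adjugate_mulVec, trace, diag, mul_apply, mulVec,
    dotProduct]

theorem prod_updateCol_perm_apply {R : Type*} [CommRing R] (A : Matrix ι ι R)
    (σ : Equiv.Perm ι) (j : ι) (c : ι → R) :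
    ∏ i, A.updateCol j c (σ i) i = (∏ i ∈ univ.erase j, A (σ i) i) * c (σ j) := by
  rw [← mul_prod_erase univ _ (mem_univ j), mul_comm, updateCol_self]
  congr 1
  exact prod_congr rfl fun i hi => updateCol_ne (ne_of_mem_erase hi)

variable {𝕜 : Type*} [NontriviallyNormedField 𝕜]

theorem hasDerivAt_det {M : 𝕜 → Matrix ι ι 𝕜} {M' : Matrix ι ι 𝕜} {t₀ : 𝕜}
    (hM : ∀ i j, HasDerivAt (fun t => M t i j) (M' i j) t₀) :
    HasDerivAt (fun t => (M t).det) (trace ((M t₀).adjugate * M')) t₀ := by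
  simp only [trace_adjugate_mul_eq_sum_det_updateCol, det_apply', prod_updateCol_perm_apply]
  rw [sum_comm]
  simp only [← mul_sum]
  exact HasDerivAt.fun_sum fun σ _ =>
    (HasDerivAt.fun_finsetProd fun i _ => hM (σ i) i).const_mul _

theorem hasDerivAt_adjugate_apply {M : 𝕜 → Matrix ι ι 𝕜} {M' : Matrix ι ι 𝕜} {t₀ : 𝕜}
    (hM : ∀ i j, HasDerivAt (fun t => M t i j) (M' i j) t₀) (i j : ι) :
    HasDerivAt (fun t => (M t).adjugate i j)
      (trace (((M t₀).updateRow j (Pi.single i 1)).adjugate * M'.updateRow j 0)) t₀ := by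
  simp only [adjugate_apply]
  refine hasDerivAt_det fun a b => ?_
  rcases eq_or_ne a j with rfl | hne
  · simpa only [updateRow_self, Pi.zero_apply] using hasDerivAt_const t₀ _
  · simpa only [updateRow_ne hne] using hM a b

theorem hasDerivAt_mul_apply {m n p : Type*} [Fintype n] {A : 𝕜 → Matrix m n 𝕜}
    {B : 𝕜 → Matrix n p 𝕜} {A' : Matrix m n 𝕜} {B' : Matrix n p 𝕜} {t₀ : 𝕜}
    (hA : ∀ i j, HasDerivAt (fun t => A t i j) (A' i j) t₀)
    (hB : ∀ i j, HasDerivAt (fun t => B t i j) (B' i j) t₀) (i : m) (k : p) :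
    HasDerivAt (fun t => (A t * B t) i k) ((A' * B t₀ + A t₀ * B') i k) t₀ := by
  simp only [mul_apply, add_apply, ← sum_add_distrib]
  exact HasDerivAt.fun_sum fun j _ => (hA i j).mul (hB j k)

theorem eq_det_inv_smul_mul_adjugate_of_mul_eq {K : Type*} [Field K] {A B M : Matrix ι ι K}
    (h : A * M = B) (hM : M.det ≠ 0) : A = M.det⁻¹ • (B * M.adjugate) := by
  rw [← h, Matrix.mul_assoc, mul_adjugate, Matrix.mul_smul, Matrix.mul_one, smul_smul,
    inv_mul_cancel₀ hM, one_smul]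

end Matrix

open Matrix in
/-- **Differentiation of the cofactor (adjugate) matrix** (formula (2.13),
Section 2.2.2): if `t ↦ M t` has entrywise derivative `M'` at `t₀` and
`det (M t₀) ≠ 0`, then `t ↦ adjugate (M t)` has entrywise derivative
`(det (M t₀))⁻¹ • (trace (adjugate (M t₀) * M') • adjugate (M t₀)
  - adjugate (M t₀) * M' * adjugate (M t₀))` at `t₀`. -/
theorem hasDerivAt_adjugate_of_hasDerivAt_entries
    (n : ℕ) (M : ℝ → Matrix (Fin n) (Fin n) ℝ) (M' : Matrix (Fin n) (Fin n) ℝ)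
    (t₀ : ℝ)
    (hM : ∀ i j, HasDerivAt (fun t => M t i j) (M' i j) t₀)
    (hdet : (M t₀).det ≠ 0) :
    ∀ i j, HasDerivAt (fun t => (M t).adjugate i j)
      (((M t₀).det⁻¹ •
        (Matrix.trace ((M t₀).adjugate * M') • (M t₀).adjugate
          - (M t₀).adjugate * M' * (M t₀).adjugate)) i j) t₀ := by
  set A' : Matrix (Fin n) (Fin n) ℝ := of fun i j =>
    trace (((M t₀).updateRow j (Pi.single i 1)).adjugate * M'.updateRow j 0)
  have hA' : ∀ i j, HasDerivAt (fun t => (M t).adjugate i j) (A' i j) t₀ :=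
    hasDerivAt_adjugate_apply hM
  have hA'M : A' * M t₀ = trace ((M t₀).adjugate * M') • 1 - (M t₀).adjugate * M' := by
    rw [eq_sub_iff_add_eq]
    ext i j
    refine (hasDerivAt_mul_apply hA' hM i j).unique ?_
    simpa only [adjugate_mul, Matrix.smul_apply, smul_eq_mul] using
      (hasDerivAt_det hM).mul_const ((1 : Matrix (Fin n) (Fin n) ℝ) i j)
  have hA'_eq := eq_det_inv_smul_mul_adjugate_of_mul_eq hA'M hdet
  rw [sub_mul, smul_mul, Matrix.one_mul] at hA'_eq
  rw [← hA'_eq]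
  exact hA'
end
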